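/- arXiv:math/0606161 — 2 statements merged into one kernel-verified Lean document; each statement's English description precedes it below -/
import Mathlib

section
/- For every integer n, det(Aⁿ − M) = 2, where A = [[2,1],[1,1]] and M = [[0,1],[-1,0]]. -/
/-! Since `A` is symmetric, so is every power `Aⁿ`, including negative ones (the inverse of a
symmetric matrix is symmetric). For a symmetric 2×2 matrix `B` the off-diagonal contributions
of `M` cancel in `det (B - M)`, leaving `det B + 1`, and `det Aⁿ = 1`. -/

/-- The matrix A = [[2,1],[1,1]] as an element of SL(2,ℤ). -/
def A : Matrix.SpecialLinearGroup (Fin 2) ℤ :=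
  ⟨!![2, 1; 1, 1], by simp [Matrix.det_fin_two_of]⟩

/-- The matrix M = [[0,1],[-1,0]]. -/
def M : Matrix (Fin 2) (Fin 2) ℤ := !![0, 1; -1, 0]

namespace Matrix

theorem det_sub_rotation_of_isSymm {R : Type*} [CommRing R] {B : Matrix (Fin 2) (Fin 2) R}
    (hB : B.IsSymm) : (B - !![0, 1; -1, 0]).det = B.det + 1 := by
  have hB10 : B 1 0 = B 0 1 := hB.apply 0 1
  simp only [det_fin_two, sub_apply, of_apply, cons_val', cons_val_zero, cons_val_one,
    empty_val', cons_val_fin_one, hB10]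
  ring

namespace SpecialLinearGroup

variable {n R : Type*} [DecidableEq n] [Fintype n] [CommRing R]

theorem coe_inv_eq_nonsing_inv (B : SpecialLinearGroup n R) :
    (↑(B⁻¹) : Matrix n n R) = (↑B)⁻¹ :=
  (inv_eq_left_inv (by rw [← coe_mul, inv_mul_cancel, coe_one])).symm

theorem coe_zpow (B : SpecialLinearGroup n R) : ∀ k : ℤ, (↑(B ^ k) : Matrix n n R) = ↑B ^ k
  | (k : ℕ) => by rw [zpow_natCast, zpow_natCast, coe_pow]
  | .negSucc k => by rw [zpow_negSucc, zpow_negSucc, coe_inv_eq_nonsing_inv, coe_pow]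

end SpecialLinearGroup

end Matrix

theorem isSymm_coe_A : (A : Matrix (Fin 2) (Fin 2) ℤ).IsSymm :=
  Matrix.IsSymm.ext fun i j => by fin_cases i <;> fin_cases j <;> rfl

theorem stmt2 (n : ℤ) :
    (((A ^ n : Matrix.SpecialLinearGroup (Fin 2) ℤ) : Matrix (Fin 2) (Fin 2) ℤ) - M).det = 2 := by
  have hsymm :
      ((A ^ n : Matrix.SpecialLinearGroup (Fin 2) ℤ) : Matrix (Fin 2) (Fin 2) ℤ).IsSymm := by
    rw [Matrix.SpecialLinearGroup.coe_zpow]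
    exact isSymm_coe_A.zpow n
  rw [M, Matrix.det_sub_rotation_of_isSymm hsymm, (A ^ n).prop]
  norm_num
end

section
/- Every element of G with even second component (level) is φ-twisted-conjugate to an element of the form ((m,k),0), and every element with odd level is φ-twisted-conjugate to an element of the form ((m,k),1). -/
/-- The automorphism of ℤ² given by the matrix A = [[2,1],[1,1]]. -/
def α : AddAut (ℤ × ℤ) where
  toFun p := (2 * p.1 + p.2, p.1 + p.2)
  invFun p := (p.1 - p.2, -p.1 + 2 * p.2)
  left_inv p := by obtain ⟨x, y⟩ := p; simp only [Prod.mk.injEq]; constructor <;> ring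
  right_inv p := by obtain ⟨x, y⟩ := p; simp only [Prod.mk.injEq]; constructor <;> ring
  map_add' p q := by simp only [Prod.fst_add, Prod.snd_add, Prod.mk_add_mk, Prod.mk.injEq]; constructor <;> ring

/-- The automorphism of ℤ² given by the matrix M = [[0,1],[-1,0]]. -/
def μ : AddAut (ℤ × ℤ) where
  toFun p := (p.2, -p.1)
  invFun p := (-p.2, p.1)
  left_inv p := by simp
  right_inv p := by simp
  map_add' p q := by simp only [Prod.fst_add, Prod.snd_add, Prod.mk_add_mk, Prod.mk.injEq]; constructor <;> first | trivial | ring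

/-- The automorphism group structure on `AddAut A` as it was in older Mathlib (multiplicative,
with multiplication given by composition). -/
instance AddAutOld.instGroup (A : Type*) [Add A] : Group (AddAut A) where
  mul g h := AddEquiv.trans h g
  one := AddEquiv.refl _
  inv := AddEquiv.symm
  mul_assoc _ _ _ := rfl
  one_mul _ := rfl
  mul_one _ := rfl
  inv_mul_cancel := AddEquiv.self_trans_symm

@[simp] lemma AddAutOld.mul_apply {A : Type*} [Add A] (e₁ e₂ : AddAut A) (m : A) :
    (e₁ * e₂) m = e₁ (e₂ m) := rfl
@[simp] lemma AddAutOld.one_apply {A : Type*} [Add A] (m : A) : (1 : AddAut A) m = m := rfl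
@[simp] lemma AddAutOld.inv_apply {A : Type*} [Add A] (e : AddAut A) (m : A) :
    e⁻¹ m = e.symm m := rfl

/-- The semidirect product G = ℤ² ⋊_α ℤ. -/
@[ext] structure G where
  x : ℤ × ℤ
  n : ℤ

instance : Mul G := ⟨fun g h => ⟨g.x + (α ^ g.n) h.x, g.n + h.n⟩⟩
instance : One G := ⟨⟨0, 0⟩⟩
instance : Inv G := ⟨fun g => ⟨-((α ^ (-g.n)) g.x), -g.n⟩⟩

lemma G.mul_def (g h : G) : g * h = ⟨g.x + (α ^ g.n) h.x, g.n + h.n⟩ := rfl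
lemma G.one_def : (1 : G) = ⟨0, 0⟩ := rfl
lemma G.inv_def (g : G) : g⁻¹ = ⟨-((α ^ (-g.n)) g.x), -g.n⟩ := rfl

instance : Group G where
  mul_assoc a b c := by
    ext : 1
    · show (a.x + (α ^ a.n) b.x) + (α ^ (a.n + b.n)) c.x
        = a.x + (α ^ a.n) (b.x + (α ^ b.n) c.x)
      rw [zpow_add, AddAutOld.mul_apply, map_add]; abel
    · show a.n + b.n + c.n = a.n + (b.n + c.n); ring
  one_mul a := by
    ext : 1
    · show (0 : ℤ × ℤ) + (α ^ (0:ℤ)) a.x = a.x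
      simp
    · show (0 : ℤ) + a.n = a.n; ring
  mul_one a := by
    ext : 1
    · show a.x + (α ^ a.n) 0 = a.x
      simp
    · show a.n + 0 = a.n; ring
  inv_mul_cancel a := by
    ext : 1
    · show -((α ^ (-a.n)) a.x) + (α ^ (-a.n)) a.x = 0
      simp
    · show -a.n + a.n = 0; ring

lemma mu_alpha : μ * α = α⁻¹ * μ := by
  apply AddEquiv.ext
  intro p
  rw [AddAutOld.mul_apply, AddAutOld.mul_apply]
  show μ (α p) = α.symm (μ p)
  show ((α p).2, -(α p).1) = α.symm (p.2, -p.1)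
  show ((p.1 + p.2 : ℤ), -(2 * p.1 + p.2)) = (p.2 - (-p.1), -p.2 + 2 * (-p.1))
  simp only [Prod.mk.injEq]; constructor <;> ring

lemma mu_alpha_conj : μ * α * μ⁻¹ = α⁻¹ := by
  rw [mu_alpha, mul_assoc]
  simp

lemma mu_alpha_zpow (n : ℤ) : μ * α ^ n = α ^ (-n) * μ := by
  have h : MulAut.conj μ (α ^ n) = α ^ (-n) := by
    rw [map_zpow, MulAut.conj_apply, mu_alpha_conj, inv_zpow, zpow_neg]
  rw [MulAut.conj_apply] at h
  calc μ * α ^ n = (μ * α ^ n * μ⁻¹) * μ := by group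
    _ = α ^ (-n) * μ := by rw [h]

/-- The automorphism φ((m,k),n) = ((k,-m),-n). -/
def φ : G ≃* G where
  toFun g := ⟨μ g.x, -g.n⟩
  invFun g := ⟨μ⁻¹ g.x, -g.n⟩
  left_inv g := by
    ext : 1
    · show μ⁻¹ (μ g.x) = g.x
      simp
    · simp
  right_inv g := by
    ext : 1
    · show μ (μ⁻¹ g.x) = g.x
      simp
    · simp
  map_mul' g h := by
    ext : 1
    · show μ (g.x + (α ^ g.n) h.x) = μ g.x + (α ^ (-g.n)) (μ h.x)
      rw [map_add]
      congr 1
      calc μ ((α ^ g.n) h.x) = (μ * α ^ g.n) h.x := rfl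
        _ = (α ^ (-g.n) * μ) h.x := by rw [mu_alpha_zpow]
        _ = (α ^ (-g.n)) (μ h.x) := rfl
    · show -(g.n + h.n) = -g.n + -h.n; ring

/-- φ-twisted conjugacy. -/
def twConj (h h' : G) : Prop := ∃ g : G, h' = g * h * (φ g)⁻¹

@[simp] lemma G.n_mul (g h : G) : (g * h).n = g.n + h.n := rfl

@[simp] lemma G.n_inv (g : G) : g⁻¹.n = -g.n := rfl

@[simp] lemma G.n_φ (g : G) : (φ g).n = -g.n := rfl

lemma G.n_twisted_conj (g h : G) : (g * h * (φ g)⁻¹).n = h.n + 2 * g.n := by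
  simp only [G.n_mul, G.n_inv, G.n_φ]
  ring

lemma exists_twConj_mk_of_even_sub {h : G} {r : ℤ} (hr : Even (h.n - r)) :
    ∃ m k : ℤ, twConj h ⟨(m, k), r⟩ := by
  obtain ⟨s, hs⟩ := hr
  set t : G := ⟨0, -s⟩
  have hn : (t * h * (φ t)⁻¹).n = r := by
    rw [G.n_twisted_conj]
    simp only [t]
    omega
  exact ⟨_, _, t, G.ext rfl hn.symm⟩

theorem stmt5 (g : G) :
    (Even g.n → ∃ m k : ℤ, twConj g ⟨(m, k), 0⟩) ∧
    (Odd g.n → ∃ m k : ℤ, twConj g ⟨(m, k), 1⟩) :=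
  ⟨fun heven => exists_twConj_mk_of_even_sub (by rwa [sub_zero]),
    fun hodd => exists_twConj_mk_of_even_sub (hodd.sub_odd odd_one)⟩
end
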